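/- arXiv:1805.10838 — 2 statements merged into one kernel-verified Lean document; each statement's English description precedes it below -/
import Mathlib

section
/- Let φ : [0,T] → ℝ be continuous, non-decreasing and non-negative, and let t, τ ∈ [0,T] with t > τ. Then (I^α φ)(t) − (I^α φ)(τ) ≥ φ(τ)(t^α − τ^α)/Γ(α+1). -/
open MeasureTheory Set Real RealInnerProductSpace

noncomputable section

abbrev Evec (n : ℕ) := EuclideanSpace ℝ (Fin n)

/-- Generalized binomial coefficient `binom a j`. -/
def binomR (a : ℝ) (j : ℕ) : ℝ :=
  (∏ i ∈ Finset.range j, (a - (i : ℝ))) / (Nat.factorial j : ℝ)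

/-- Left-sided Riemann–Liouville fractional integral of order `α` with base point `0`. -/
def RLint {E : Type*} [NormedAddCommGroup E] [NormedSpace ℝ E]
    (α : ℝ) (f : ℝ → E) (t : ℝ) : E :=
  (Real.Gamma α)⁻¹ • ∫ τ in (0:ℝ)..t, ((t - τ) ^ (α - 1) : ℝ) • f τ

/-- Left-sided Riemann–Liouville fractional derivative of order `α` with base point `0`. -/
def RLderiv {E : Type*} [NormedAddCommGroup E] [NormedSpace ℝ E]
    (α : ℝ) (x : ℝ → E) (t : ℝ) : E :=
  deriv (fun s => (Real.Gamma (1 - α))⁻¹ • ∫ τ in (0:ℝ)..s, ((s - τ) ^ (-α) : ℝ) • x τ) t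

/-- Caputo fractional derivative of order `α` with base point `0`. -/
def CapDeriv {E : Type*} [NormedAddCommGroup E] [NormedSpace ℝ E]
    (α : ℝ) (x : ℝ → E) (t : ℝ) : E :=
  RLderiv α (fun s => x s - x 0) t

/-- Grünwald–Letnikov fractional difference of order `α` with step `h`. -/
def GLdiff {E : Type*} [NormedAddCommGroup E] [NormedSpace ℝ E]
    (α h : ℝ) (x : ℝ → E) (t : ℝ) : E :=
  ∑ j ∈ Finset.range (⌊t / h⌋₊ + 1), ((-1 : ℝ) ^ j * binomR α j) • x (t - (j : ℝ) * h)

/-- The kernel `p_α`. -/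
def pker (α : ℝ) (τ : ℝ) : ℝ :=
  (Real.Gamma α)⁻¹ * ∑ j ∈ Finset.range ⌈τ⌉₊, (-1 : ℝ) ^ j * binomR α j * ((τ - (j : ℝ)) ^ (α - 1) : ℝ)

/-- Mittag-Leffler function `E_α`. -/
def mittagLeffler (α z : ℝ) : ℝ := ∑' k : ℕ, z ^ k / Real.Gamma (α * (k : ℝ) + 1)

/-- `x` is a solution of the Caputo Cauchy problem `(^C D^α x)(t) = f(t, x(t))`, `x 0 = x₀`. -/
def IsCaputoSol (α T : ℝ) {n : ℕ} (f : ℝ → Evec n → Evec n) (x₀ : Evec n)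
    (x : ℝ → Evec n) : Prop :=
  (∃ φ : ℝ → Evec n, Measurable φ ∧
    (∃ C : ℝ, ∀ᵐ t ∂volume.restrict (Icc (0:ℝ) T), ‖φ t‖ ≤ C) ∧
    ∀ t ∈ Icc (0:ℝ) T, x t = x₀ + RLint α φ t) ∧
  ∀ᵐ t ∂volume.restrict (Icc (0:ℝ) T), CapDeriv α x t = f t (x t)

/-- `y` is a solution of the approximating retarded functional-differential Cauchy problem. -/
def IsApproxSol (α T h : ℝ) {n : ℕ} (f : ℝ → Evec n → Evec n) (x₀ : Evec n)
    (y : ℝ → Evec n) : Prop :=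
  (∃ Ly : NNReal, LipschitzOnWith Ly y (Icc (0:ℝ) T)) ∧ y 0 = 0 ∧
  ∀ᵐ t ∂volume.restrict (Icc (0:ℝ) T),
    HasDerivAt y (f t (x₀ + ((h ^ (α - 1) : ℝ)) • GLdiff (1 - α) h y t)) t

/-- `x` is a motion of the conflict-controlled Caputo system for realizations `u`, `v`. -/
def IsCtrlSol (α T : ℝ) {n nu nv : ℕ}
    (g : ℝ → Evec n → Evec nu → Evec nv → Evec n) (x₀ : Evec n)
    (u : ℝ → Evec nu) (v : ℝ → Evec nv) (x : ℝ → Evec n) : Prop :=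
  (∃ φ : ℝ → Evec n, Measurable φ ∧
    (∃ C : ℝ, ∀ᵐ t ∂volume.restrict (Icc (0:ℝ) T), ‖φ t‖ ≤ C) ∧
    ∀ t ∈ Icc (0:ℝ) T, x t = x₀ + RLint α φ t) ∧
  ∀ᵐ t ∂volume.restrict (Icc (0:ℝ) T), CapDeriv α x t = g t (x t) (u t) (v t)

/-- `y` is a motion of the approximating conflict-controlled system for realizations `ũ`, `ṽ`. -/
def IsCtrlApproxSol (α T h : ℝ) {n nu nv : ℕ}
    (g : ℝ → Evec n → Evec nu → Evec nv → Evec n) (x₀ : Evec n)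
    (ut : ℝ → Evec nu) (vt : ℝ → Evec nv) (y : ℝ → Evec n) : Prop :=
  (∃ Ly : NNReal, LipschitzOnWith Ly y (Icc (0:ℝ) T)) ∧ y 0 = 0 ∧
  ∀ᵐ t ∂volume.restrict (Icc (0:ℝ) T),
    HasDerivAt y (g t (x₀ + ((h ^ (α - 1) : ℝ)) • GLdiff (1 - α) h y t) (ut t) (vt t)) t


theorem stmt2 (α T : ℝ) (hα : α ∈ Ioo (0:ℝ) 1) (hT : 0 < T)
    (φ : ℝ → ℝ) (hφc : ContinuousOn φ (Icc (0:ℝ) T))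
    (hφmono : MonotoneOn φ (Icc (0:ℝ) T))
    (hφpos : ∀ s ∈ Icc (0:ℝ) T, 0 ≤ φ s)
    (t τ : ℝ) (ht : t ∈ Icc (0:ℝ) T) (hτ : τ ∈ Icc (0:ℝ) T) (htτ : τ < t) :
    φ τ * (t ^ α - τ ^ α) / Real.Gamma (α + 1) ≤ RLint α φ t - RLint α φ τ := by
  obtain ⟨hα0, hα1⟩ := hα
  obtain ⟨ht0, htT⟩ := ht
  obtain ⟨hτ0, hτT⟩ := hτ
  have hΓ : 0 < Real.Gamma α := Real.Gamma_pos_of_pos hα0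
  have hαm : (-1:ℝ) < α - 1 := by linarith
  -- kernel integrability on 0..s
  have kint : ∀ s : ℝ, IntervalIntegrable (fun ξ => (s - ξ) ^ (α-1)) volume 0 s := by
    intro s
    have h1 : IntervalIntegrable (fun x : ℝ => x ^ (α-1)) volume 0 s :=
      intervalIntegral.intervalIntegrable_rpow' hαm
    simpa using (h1.comp_sub_left s).symm
  -- kernel integral value
  have kval : ∀ s : ℝ, 0 ≤ s → (∫ ξ in (0:ℝ)..s, (s - ξ)^(α-1)) = s^α / α := by
    intro s hs
    rw [intervalIntegral.integral_comp_sub_left (fun x => x ^ (α-1)) s]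
    simp only [sub_self, sub_zero]
    rw [integral_rpow (Or.inl hαm), sub_add_cancel, Real.zero_rpow (by linarith)]
    ring
  have hsub1 : uIcc (0:ℝ) τ ⊆ uIcc (0:ℝ) t := by
    rw [uIcc_of_le hτ0, uIcc_of_le ht0]; exact Icc_subset_Icc le_rfl htτ.le
  have hsub2 : uIcc τ t ⊆ uIcc (0:ℝ) t := by
    rw [uIcc_of_le htτ.le, uIcc_of_le ht0]; exact Icc_subset_Icc hτ0 le_rfl
  have hφc1 : ContinuousOn φ (uIcc (0:ℝ) τ) := by
    rw [uIcc_of_le hτ0]; exact hφc.mono (Icc_subset_Icc le_rfl hτT)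
  have hφc2 : ContinuousOn φ (uIcc τ t) := by
    rw [uIcc_of_le htτ.le]; exact hφc.mono (Icc_subset_Icc hτ0 htT)
  have hφct : ContinuousOn φ (uIcc (0:ℝ) t) := by
    rw [uIcc_of_le ht0]; exact hφc.mono (Icc_subset_Icc le_rfl htT)
  -- integrabilities
  have It1 : IntervalIntegrable (fun ξ => (t - ξ)^(α-1) * φ ξ) volume 0 τ :=
    ((kint t).mono_set hsub1).mul_continuousOn hφc1
  have Iτ1 : IntervalIntegrable (fun ξ => (τ - ξ)^(α-1) * φ ξ) volume 0 τ :=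
    (kint τ).mul_continuousOn hφc1
  have It2 : IntervalIntegrable (fun ξ => (t - ξ)^(α-1) * φ ξ) volume τ t :=
    ((kint t).mono_set hsub2).mul_continuousOn hφc2
  have Itk1 : IntervalIntegrable (fun ξ => (t - ξ)^(α-1)) volume 0 τ :=
    (kint t).mono_set hsub1
  have Itk2 : IntervalIntegrable (fun ξ => (t - ξ)^(α-1)) volume τ t :=
    (kint t).mono_set hsub2
  -- split the integral over 0..t
  have hsplit : (∫ ξ in (0:ℝ)..t, (t - ξ)^(α-1) * φ ξ)
      = (∫ ξ in (0:ℝ)..τ, (t - ξ)^(α-1) * φ ξ) + ∫ ξ in τ..t, (t - ξ)^(α-1) * φ ξ :=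
    (intervalIntegral.integral_add_adjacent_intervals It1 It2).symm
  have hksplit : (∫ ξ in (0:ℝ)..t, (t - ξ)^(α-1))
      = (∫ ξ in (0:ℝ)..τ, (t - ξ)^(α-1)) + ∫ ξ in τ..t, (t - ξ)^(α-1) :=
    (intervalIntegral.integral_add_adjacent_intervals Itk1 Itk2).symm
  -- pointwise bound on [0, τ]
  have L1 : (∫ ξ in (0:ℝ)..τ, ((t - ξ)^(α-1) - (τ - ξ)^(α-1)) * φ τ)
      ≤ ∫ ξ in (0:ℝ)..τ, ((t - ξ)^(α-1) - (τ - ξ)^(α-1)) * φ ξ := by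
    apply intervalIntegral.integral_mono_on hτ0
    · exact ((Itk1.sub (kint τ)).mul_continuousOn (continuousOn_const))
    · exact (Itk1.sub (kint τ)).mul_continuousOn hφc1
    · intro ξ hξ
      rcases eq_or_lt_of_le hξ.2 with h | h
      · subst h; rfl
      · have hb : (t - ξ)^(α-1) - (τ - ξ)^(α-1) ≤ 0 := by
          have : (t - ξ)^(α-1) ≤ (τ - ξ)^(α-1) :=
            Real.rpow_le_rpow_of_nonpos (by linarith) (by linarith) (by linarith)
          linarith
        have hφle : φ ξ ≤ φ τ := hφmono ⟨hξ.1, by linarith⟩ ⟨hτ0, hτT⟩ hξ.2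
        nlinarith
  -- pointwise bound on [τ, t]
  have L2 : (∫ ξ in τ..t, (t - ξ)^(α-1) * φ τ) ≤ ∫ ξ in τ..t, (t - ξ)^(α-1) * φ ξ := by
    apply intervalIntegral.integral_mono_on htτ.le
    · exact Itk2.mul_continuousOn continuousOn_const
    · exact It2
    · intro ξ hξ
      have hk : 0 ≤ (t - ξ)^(α-1) := Real.rpow_nonneg (by linarith [hξ.2]) _
      have hφle : φ τ ≤ φ ξ := hφmono ⟨hτ0, hτT⟩ ⟨by linarith [hξ.1], by linarith [hξ.2]⟩ hξ.1
      nlinarith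
  -- evaluate the constant integrals
  have hc1 : (∫ ξ in (0:ℝ)..τ, ((t - ξ)^(α-1) - (τ - ξ)^(α-1)) * φ τ)
      = ((∫ ξ in (0:ℝ)..τ, (t - ξ)^(α-1)) - τ^α/α) * φ τ := by
    rw [intervalIntegral.integral_mul_const, intervalIntegral.integral_sub Itk1 (kint τ),
      kval τ hτ0]
  have hc2 : (∫ ξ in τ..t, (t - ξ)^(α-1) * φ τ) = (∫ ξ in τ..t, (t - ξ)^(α-1)) * φ τ := by
    rw [intervalIntegral.integral_mul_const]
  -- assemble
  have key : φ τ * (t^α - τ^α) / α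
      ≤ (∫ ξ in (0:ℝ)..t, (t - ξ)^(α-1) * φ ξ) - ∫ ξ in (0:ℝ)..τ, (τ - ξ)^(α-1) * φ ξ := by
    have hL : (∫ ξ in (0:ℝ)..τ, ((t - ξ)^(α-1) - (τ - ξ)^(α-1)) * φ ξ)
        = (∫ ξ in (0:ℝ)..τ, (t - ξ)^(α-1) * φ ξ) - ∫ ξ in (0:ℝ)..τ, (τ - ξ)^(α-1) * φ ξ := by
      rw [← intervalIntegral.integral_sub It1 Iτ1]
      congr 1; ext ξ; ring
    have h0 : (∫ ξ in (0:ℝ)..t, (t - ξ)^(α-1)) = t^α/α := kval t ht0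
    have := add_le_add L1 L2
    rw [hc1, hc2, hL] at this
    have heq : ((∫ ξ in (0:ℝ)..τ, (t - ξ)^(α-1)) - τ^α/α) * φ τ
        + (∫ ξ in τ..t, (t - ξ)^(α-1)) * φ τ = φ τ * (t^α - τ^α) / α := by
      have hsum : (∫ ξ in (0:ℝ)..τ, (t - ξ)^(α-1)) + (∫ ξ in τ..t, (t - ξ)^(α-1)) = t^α/α := by
        rw [← hksplit, h0]
      calc ((∫ ξ in (0:ℝ)..τ, (t - ξ)^(α-1)) - τ^α/α) * φ τ
            + (∫ ξ in τ..t, (t - ξ)^(α-1)) * φ τ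
          = ((∫ ξ in (0:ℝ)..τ, (t - ξ)^(α-1)) + (∫ ξ in τ..t, (t - ξ)^(α-1))) * φ τ
            - τ^α/α * φ τ := by ring
        _ = t^α/α * φ τ - τ^α/α * φ τ := by rw [hsum]
        _ = φ τ * (t^α - τ^α) / α := by ring
    rw [heq] at this
    linarith [hsplit]
  -- final: relate Γ(α+1) to α Γ(α)
  simp only [RLint, smul_eq_mul]
  rw [Real.Gamma_add_one (ne_of_gt hα0)]
  have h1 : φ τ * (t^α - τ^α) / (α * Real.Gamma α)
      = (Real.Gamma α)⁻¹ * (φ τ * (t^α - τ^α) / α) := by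
    rw [← div_div, div_eq_inv_mul]
  rw [h1, ← mul_sub]
  exact mul_le_mul_of_nonneg_left key (inv_nonneg.mpr hΓ.le)
end
end

section
/- For any L > 0 there exist constants K̄ > 0 and M̄ > 0 such that for every h > 0 and every Lipschitz continuous x : [0,T] → ℝⁿ with Lipschitz constant L and x(0) = 0, the divided fractional differences satisfy ‖h^{−α}(Δ_h^α x)(t) − h^{−α}(Δ_h^α x)(τ)‖ ≤ K̄ |t − τ|^{1−α} and ‖h^{−α}(Δ_h^α x)(t)‖ ≤ M̄ for all t, τ ∈ [0,T]. One may take K̄ = 2K‖p_α‖₁ and M̄ = K̄ T^{1−α}, where K is the Hölder constant of D^α on Lip_L^0 and ‖p_α‖₁ = ∫₀^∞|p_α(τ)|dτ. -/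
open MeasureTheory Set Real RealInnerProductSpace

noncomputable section

def cGL (α : ℝ) (j : ℕ) : ℝ := (-1 : ℝ) ^ j * binomR α j

def Pprod (α : ℝ) (j : ℕ) : ℝ := ∏ i ∈ Finset.range j, (((i : ℝ) + 1) - α) / ((i : ℝ) + 1)

lemma cGL_zero (α : ℝ) : cGL α 0 = 1 := by
  simp [cGL, binomR]

lemma binomR_succ (a : ℝ) (j : ℕ) :
    binomR a (j + 1) = binomR a j * (a - j) / (j + 1) := by
  have h3 : ((Nat.factorial (j+1)):ℝ) = ((j:ℝ)+1) * (Nat.factorial j) := by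
    rw [Nat.factorial_succ]; push_cast; ring
  have h1 : (Nat.factorial j : ℝ) ≠ 0 := by positivity
  have h2 : ((j:ℝ) + 1) ≠ 0 := by positivity
  unfold binomR
  rw [Finset.prod_range_succ, h3]
  rw [div_mul_eq_mul_div, div_div, mul_comm ((j:ℝ)+1)]

lemma cGL_succ (α : ℝ) (j : ℕ) :
    cGL α (j + 1) = cGL α j * ((j : ℝ) - α) / (j + 1) := by
  unfold cGL
  rw [binomR_succ, pow_succ]
  ring

lemma Pprod_succ (α : ℝ) (j : ℕ) :
    Pprod α (j + 1) = Pprod α j * (((j : ℝ) + 1) - α) / ((j : ℝ) + 1) := by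
  unfold Pprod
  rw [Finset.prod_range_succ]
  ring

lemma cGL_succ_eq (α : ℝ) (j : ℕ) :
    cGL α (j + 1) = -(α / ((j : ℝ) + 1)) * Pprod α j := by
  induction j with
  | zero => simp [cGL_succ, cGL_zero, Pprod]
  | succ m ih =>
      rw [cGL_succ, ih, Pprod_succ]
      have h1 : ((m : ℝ) + 1) ≠ 0 := by positivity
      push_cast
      field_simp

lemma sum_cGL (α : ℝ) (m : ℕ) :
    ∑ j ∈ Finset.range (m + 1), cGL α j = Pprod α m := by
  induction m with
  | zero => simp [cGL_zero, Pprod]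
  | succ m ih =>
      rw [Finset.sum_range_succ, ih, cGL_succ_eq, Pprod_succ]
      have h1 : ((m : ℝ) + 1) ≠ 0 := by positivity
      field_simp
      ring

lemma Pprod_pos {α : ℝ} (hα : α < 1) (j : ℕ) : 0 < Pprod α j := by
  apply Finset.prod_pos
  intro i _
  apply div_pos _ (by positivity)
  have : (1:ℝ) ≤ (i:ℝ) + 1 := by
    have := Nat.cast_nonneg (α := ℝ) i
    linarith
  linarith

lemma Pprod_anti {α : ℝ} (hα0 : 0 < α) (hα : α < 1) {m k : ℕ} (hmk : m ≤ k) :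
    Pprod α k ≤ Pprod α m := by
  induction k with
  | zero => simp_all
  | succ k ih =>
      rcases Nat.lt_or_ge m (k+1) with hlt | hge
      · have hmk' : m ≤ k := Nat.lt_succ_iff.mp hlt
        have h1 := ih hmk'
        have h2 : Pprod α (k+1) ≤ Pprod α k := by
          rw [Pprod_succ]
          have hk : (0:ℝ) < (k:ℝ) + 1 := by positivity
          have hp := Pprod_pos hα k
          rw [div_le_iff₀ hk]
          nlinarith
        linarith
      · have : m = k + 1 := le_antisymm hmk hge
        simp [this]

lemma log_le_harmonic (j : ℕ) :
    Real.log ((j:ℝ)+1) ≤ ∑ i ∈ Finset.range j, ((i:ℝ)+1)⁻¹ := by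
  induction j with
  | zero => simp
  | succ m ih =>
      rw [Finset.sum_range_succ]
      have hm : (0:ℝ) < (m:ℝ) + 1 := by positivity
      have hlog : Real.log (((m:ℝ)+1+1)) - Real.log ((m:ℝ)+1) ≤ ((m:ℝ)+1)⁻¹ := by
        rw [← Real.log_div (by linarith) (by linarith)]
        have := Real.log_le_sub_one_of_pos (x := ((m:ℝ)+1+1)/((m:ℝ)+1)) (by positivity)
        have heq : ((m:ℝ)+1+1)/((m:ℝ)+1) - 1 = ((m:ℝ)+1)⁻¹ := by field_simp; ring
        linarith
      push_cast
      linarith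

lemma Pprod_le_rpow {α : ℝ} (hα0 : 0 < α) (hα : α < 1) (j : ℕ) :
    Pprod α j ≤ ((j : ℝ) + 1) ^ (-α) := by
  have h1 : Pprod α j ≤ Real.exp (-α * ∑ i ∈ Finset.range j, ((i:ℝ)+1)⁻¹) := by
    rw [Finset.mul_sum, Real.exp_sum]
    apply Finset.prod_le_prod
    · intro i _
      have : (0:ℝ) < (i:ℝ) + 1 := by positivity
      apply le_of_lt; apply div_pos <;> linarith
    · intro i _
      have hi : (0:ℝ) < (i:ℝ) + 1 := by positivity
      have heq : (((i:ℝ)+1) - α) / ((i:ℝ)+1) = (-α * ((i:ℝ)+1)⁻¹) + 1 := by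
        field_simp
        ring
      rw [heq]
      exact Real.add_one_le_exp _
  calc Pprod α j ≤ Real.exp (-α * ∑ i ∈ Finset.range j, ((i:ℝ)+1)⁻¹) := h1
    _ ≤ Real.exp (-α * Real.log ((j:ℝ)+1)) := by
        apply Real.exp_le_exp.mpr
        nlinarith [log_le_harmonic j]
    _ = ((j:ℝ)+1) ^ (-α) := by
        rw [Real.rpow_def_of_pos (by positivity), mul_comm]

lemma sum_abs_cGL {α : ℝ} (hα0 : 0 < α) (hα : α < 1) (m : ℕ) :
    ∑ j ∈ Finset.range m, |cGL α j| ≤ 2 := by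
  cases m with
  | zero => simp
  | succ m =>
      have key : ∑ j ∈ Finset.range (m+1), |cGL α j| = 2 - Pprod α m := by
        induction m with
        | zero => simp [cGL_zero, Pprod]; norm_num
        | succ k ih =>
            rw [Finset.sum_range_succ, ih, cGL_succ_eq]
            have hp := Pprod_pos hα k
            have hk : (0:ℝ) < (k:ℝ)+1 := by positivity
            have habs : |(-(α / ((k:ℝ) + 1)) * Pprod α k)| = (α/((k:ℝ)+1)) * Pprod α k := by
              rw [abs_of_nonpos (by nlinarith [div_pos hα0 hk])]
              ring
            rw [habs]
            have hPsucc : Pprod α (k+1) = Pprod α k * (((k:ℝ)+1) - α)/((k:ℝ)+1) := by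
              unfold Pprod
              rw [Finset.prod_range_succ]
              push_cast; ring
            rw [hPsucc]
            field_simp
            ring
      rw [key]
      have := Pprod_pos hα m
      linarith

lemma sum_rpow_le {α : ℝ} (hα0 : 0 < α) (hα : α < 1) (q : ℕ) :
    ∑ k ∈ Finset.range q, ((k : ℝ) + 1) ^ (-α) ≤ (q : ℝ) ^ (1 - α) / (1 - α) := by
  induction q with
  | zero =>
      rw [Finset.sum_range_zero, Nat.cast_zero, Real.zero_rpow (by linarith)]
      simp
  | succ q ih =>
      rw [Finset.sum_range_succ]
      have hq1 : (0:ℝ) < (q:ℝ) + 1 := by positivity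
      have key : ((q:ℝ)+1) ^ (-α) ≤ (((q:ℝ)+1) ^ (1-α) - (q:ℝ) ^ (1-α)) / (1-α) := by
        rw [le_div_iff₀ (by linarith : (0:ℝ) < 1-α)]
        have hb : ((q:ℝ) / ((q:ℝ)+1)) ^ (1-α) ≤ 1 - (1-α) * (((q:ℝ)+1)⁻¹) := by
          have h1 : (q:ℝ)/((q:ℝ)+1) = 1 + (-(((q:ℝ)+1)⁻¹)) := by field_simp; ring
          rw [h1]
          have hinv : ((q:ℝ)+1)⁻¹ ≤ 1 := by
            rw [inv_le_one_iff₀]; right; linarith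
          have := rpow_one_add_le_one_add_mul_self (s := -(((q:ℝ)+1)⁻¹))
            (by linarith) (p := 1-α) (by linarith) (by linarith)
          linarith [this]
        have hdiv : ((q:ℝ) / ((q:ℝ)+1)) ^ (1-α) = (q:ℝ)^(1-α) / ((q:ℝ)+1)^(1-α) := by
          rw [Real.div_rpow (Nat.cast_nonneg q) (by linarith)]
        have hpos : (0:ℝ) < ((q:ℝ)+1) ^ (1-α) := by positivity
        have h2 : (q:ℝ)^(1-α) ≤ ((q:ℝ)+1)^(1-α) * (1 - (1-α) * (((q:ℝ)+1)⁻¹)) := by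
          rw [hdiv] at hb
          calc (q:ℝ)^(1-α) = ((q:ℝ)^(1-α) / ((q:ℝ)+1)^(1-α)) * ((q:ℝ)+1)^(1-α) := by
                field_simp
            _ ≤ (1 - (1-α) * (((q:ℝ)+1)⁻¹)) * ((q:ℝ)+1)^(1-α) := by
                apply mul_le_mul_of_nonneg_right hb (le_of_lt hpos)
            _ = ((q:ℝ)+1)^(1-α) * (1 - (1-α) * (((q:ℝ)+1)⁻¹)) := by ring
        have h3 : ((q:ℝ)+1)^(1-α) * (((q:ℝ)+1)⁻¹) = ((q:ℝ)+1)^(-α) := by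
          rw [← Real.rpow_neg_one ((q:ℝ)+1), ← Real.rpow_add hq1]
          ring_nf
        nlinarith [h3, h2]
      push_cast
      have e : (((q:ℝ)+1)^(1-α) - (q:ℝ)^(1-α))/(1-α) + (q:ℝ)^(1-α)/(1-α)
          = ((q:ℝ)+1)^(1-α)/(1-α) := by ring
      linarith

lemma GLdiff_ext {E : Type*} [NormedAddCommGroup E] [NormedSpace ℝ E]
    (α h : ℝ) (hh : 0 < h) (x : ℝ → E) (hx0 : x 0 = 0) (s : ℝ) (hs : 0 ≤ s)
    (J : ℕ) (hJ : ⌊s / h⌋₊ ≤ J) :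
    GLdiff α h x s = ∑ j ∈ Finset.range (J + 1), cGL α j • x (max (s - (j : ℝ) * h) 0) := by
  have step1 : GLdiff α h x s
      = ∑ j ∈ Finset.range (⌊s / h⌋₊ + 1), cGL α j • x (max (s - (j : ℝ) * h) 0) := by
    unfold GLdiff
    apply Finset.sum_congr rfl
    intro j hj
    rw [Finset.mem_range, Nat.lt_succ_iff] at hj
    have h1 : (j : ℝ) ≤ s / h := by
      exact_mod_cast (Nat.le_floor_iff (by positivity)).mp hj
    have h2 : (j : ℝ) * h ≤ s := by
      rw [← le_div_iff₀ hh]; exact h1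
    rw [max_eq_left (by linarith)]
    rfl
  rw [step1]
  apply Finset.sum_subset (Finset.range_subset_range.mpr (by omega))
  intro j hjJ hjnot
  have hlt : ⌊s / h⌋₊ < j := by
    rw [Finset.mem_range] at hjJ hjnot
    omega
  have h3 : s / h < j := (Nat.floor_lt (by positivity)).mp hlt
  have h4 : s < (j : ℝ) * h := by
    rw [div_lt_iff₀ hh] at h3; linarith
  rw [max_eq_right (by linarith), hx0, smul_zero]

set_option maxHeartbeats 2000000 in
lemma main_holder {α T L : ℝ} (hα0 : 0 < α) (hα1 : α < 1) (hT : 0 < T) (hL : 0 < L)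
    {n : ℕ} (h : ℝ) (hh : 0 < h) (x : ℝ → Evec n)
    (hx : LipschitzOnWith L.toNNReal x (Icc (0:ℝ) T)) (hx0 : x 0 = 0)
    {t τ : ℝ} (ht : t ∈ Icc (0:ℝ) T) (hτ : τ ∈ Icc (0:ℝ) T) (hτt : τ ≤ t) :
    ‖((h ^ (-α) : ℝ)) • GLdiff α h x t - ((h ^ (-α) : ℝ)) • GLdiff α h x τ‖ ≤
      (2 * L / (1 - α) + 2 * L) * (t - τ) ^ (1 - α) := by
  obtain ⟨ht0, htT⟩ := ht
  obtain ⟨hτ0, hτT⟩ := hτ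
  set xt : ℝ → Evec n := fun s => x (max s 0) with hxt
  have hxtz : ∀ s : ℝ, s ≤ 0 → xt s = 0 := by
    intro s hs
    simp only [hxt]
    rw [max_eq_right hs, hx0]
  have hlip : ∀ s s' : ℝ, s ≤ T → s' ≤ T → ‖xt s - xt s'‖ ≤ L * |s - s'| := by
    intro s s' hsT hs'T
    have m1 : max s 0 ∈ Icc (0:ℝ) T := ⟨le_max_right _ _, max_le hsT (le_of_lt hT)⟩
    have m2 : max s' 0 ∈ Icc (0:ℝ) T := ⟨le_max_right _ _, max_le hs'T (le_of_lt hT)⟩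
    have := hx.dist_le_mul _ m1 _ m2
    rw [dist_eq_norm, Real.dist_eq] at this
    have hmax : |max s 0 - max s' 0| ≤ |s - s'| := abs_max_sub_max_le_abs s s' 0
    have hcoe : (L.toNNReal : ℝ) = L := Real.coe_toNNReal L (le_of_lt hL)
    calc ‖xt s - xt s'‖ ≤ (L.toNNReal : ℝ) * |max s 0 - max s' 0| := this
      _ ≤ L * |s - s'| := by
          rw [hcoe]
          exact mul_le_mul_of_nonneg_left hmax (le_of_lt hL)
  -- grid data
  set δ : ℝ := t - τ with hδ
  have hδ0 : 0 ≤ δ := by linarith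
  set q : ℕ := ⌊δ / h⌋₊ with hq
  set J : ℕ := ⌊t / h⌋₊ with hJ
  set r : ℝ := δ - q * h with hr
  have hqh : (q : ℝ) * h ≤ δ := by
    have := Nat.floor_le (by positivity : (0:ℝ) ≤ δ / h)
    rw [← hq] at this
    calc (q:ℝ) * h ≤ (δ / h) * h := mul_le_mul_of_nonneg_right this (le_of_lt hh)
      _ = δ := by field_simp
  have hr0 : 0 ≤ r := by simp only [hr]; linarith
  have hrh : r < h := by
    have := Nat.lt_floor_add_one (δ / h)
    rw [← hq] at this
    have h2 : δ < ((q:ℝ) + 1) * h := by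
      rw [← div_lt_iff₀ hh]; exact_mod_cast this
    simp only [hr]; nlinarith
  have hrδ : r ≤ δ := by
    simp only [hr]
    have : 0 ≤ (q:ℝ) * h := by positivity
    linarith
  -- extended sums
  have hJτ : ⌊τ / h⌋₊ ≤ J := by
    apply Nat.floor_mono
    gcongr
  have hGt : GLdiff α h x t = ∑ j ∈ Finset.range (J + 1), cGL α j • xt (t - (j:ℝ) * h) :=
    GLdiff_ext α h hh x hx0 t ht0 J le_rfl
  have hGτ : GLdiff α h x τ = ∑ j ∈ Finset.range (J + 1), cGL α j • xt (τ - (j:ℝ) * h) :=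
    GLdiff_ext α h hh x hx0 τ hτ0 J hJτ
  set z : ℕ → Evec n := fun k => xt (t - (k:ℝ) * h) - xt (t - ((k:ℝ) + 1) * h) with hz
  set R : ℕ → Evec n := fun j => xt (τ + r - (j:ℝ) * h) - xt (τ - (j:ℝ) * h) with hR
  have key_j : ∀ j : ℕ, xt (t - (j:ℝ) * h) - xt (τ - (j:ℝ) * h)
      = (∑ i ∈ Finset.range q, z (j + i)) + R j := by
    intro j
    have tele : ∑ i ∈ Finset.range q, z (j + i)
        = xt (t - (j:ℝ) * h) - xt (t - ((j:ℝ) + (q:ℝ)) * h) := by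
      have h0 := Finset.sum_range_sub' (fun i : ℕ => xt (t - ((j:ℝ) + (i:ℝ)) * h)) q
      push_cast at h0
      simp only [add_zero] at h0
      rw [← h0]
      · apply Finset.sum_congr rfl
        intro i _
        simp only [hz]
        congr 2
        · push_cast; ring
        · push_cast; ring
    rw [tele]
    have harg : t - ((j:ℝ) + (q:ℝ)) * h = τ + r - (j:ℝ) * h := by
      simp only [hr, hδ]; ring
    rw [harg]
    simp only [hR]
    abel
  have hFdiff : GLdiff α h x t - GLdiff α h x τ
      = (∑ j ∈ Finset.range (J + 1), ∑ i ∈ Finset.range q, cGL α j • z (j + i))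
        + ∑ j ∈ Finset.range (J + 1), cGL α j • R j := by
    rw [hGt, hGτ, ← Finset.sum_sub_distrib, ← Finset.sum_add_distrib]
    apply Finset.sum_congr rfl
    intro j _
    rw [← smul_sub, key_j j, smul_add, Finset.smul_sum]
  set σ : ℕ → ℝ := fun k => ∑ j ∈ Finset.Ico (k + 1 - q) (min (k + 1) (J + 1)), cGL α j
    with hσ
  have hswap : (∑ j ∈ Finset.range (J + 1), ∑ i ∈ Finset.range q, cGL α j • z (j + i))
      = ∑ k ∈ Finset.range (J + q), σ k • z k := by
    calc ∑ j ∈ Finset.range (J + 1), ∑ i ∈ Finset.range q, cGL α j • z (j + i)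
        = ∑ j ∈ Finset.range (J + 1), ∑ k ∈ Finset.Ico j (j + q), cGL α j • z k := by
          apply Finset.sum_congr rfl
          intro j _
          rw [Finset.sum_Ico_eq_sum_range]
          simp only [Nat.add_sub_cancel_left]
      _ = ∑ j ∈ Finset.range (J + 1), ∑ k ∈ Finset.range (J + q),
            (if k ∈ Finset.Ico j (j + q) then cGL α j • z k else 0) := by
          apply Finset.sum_congr rfl
          intro j hj
          rw [Finset.sum_ite_mem, Finset.inter_eq_right.mpr]
          intro k hk
          rw [Finset.mem_range] at hj ⊢
          rw [Finset.mem_Ico] at hk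
          omega
      _ = ∑ k ∈ Finset.range (J + q), ∑ j ∈ Finset.range (J + 1),
            (if k ∈ Finset.Ico j (j + q) then cGL α j • z k else 0) := Finset.sum_comm
      _ = ∑ k ∈ Finset.range (J + q), σ k • z k := by
          apply Finset.sum_congr rfl
          intro k _
          have e1 : ∀ j : ℕ, (if k ∈ Finset.Ico j (j + q) then cGL α j • z k else 0)
              = (if k ∈ Finset.Ico j (j + q) then cGL α j else 0) • z k := by
            intro j
            split <;> simp
          simp only [e1, ← Finset.sum_smul]
          congr 1
          rw [← Finset.sum_filter]
          apply Finset.sum_congr _ (fun _ _ => rfl)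
          ext j
          simp only [Finset.mem_filter, Finset.mem_range, Finset.mem_Ico, lt_min_iff]
          omega
  -- pointwise bounds
  have hzzero : ∀ k : ℕ, J < k → z k = 0 := by
    intro k hk
    have h1 : t / h < (k : ℝ) := by
      exact_mod_cast (Nat.floor_lt (by positivity)).mp hk
    have h2 : t < (k:ℝ) * h := by rw [div_lt_iff₀ hh] at h1; linarith
    have h3 : (0:ℝ) ≤ (k:ℝ) * h := by positivity
    simp only [hz]
    rw [hxtz _ (by linarith), hxtz _ (by nlinarith), sub_zero]
  have hzbound : ∀ k : ℕ, ‖z k‖ ≤ L * h := by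
    intro k
    have h3 : (0:ℝ) ≤ (k:ℝ) * h := by positivity
    have h4 : (0:ℝ) ≤ ((k:ℝ)+1) * h := by positivity
    have := hlip (t - (k:ℝ)*h) (t - ((k:ℝ)+1)*h) (by linarith) (by linarith)
    simp only [hz]
    calc ‖xt (t - (k:ℝ)*h) - xt (t - ((k:ℝ)+1)*h)‖
        ≤ L * |t - (k:ℝ)*h - (t - ((k:ℝ)+1)*h)| := this
      _ = L * h := by
          rw [show t - (k:ℝ)*h - (t - ((k:ℝ)+1)*h) = h by ring, abs_of_pos hh]
  have hRbound : ∀ j : ℕ, ‖R j‖ ≤ L * r := by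
    intro j
    have h3 : (0:ℝ) ≤ (j:ℝ) * h := by positivity
    have := hlip (τ + r - (j:ℝ)*h) (τ - (j:ℝ)*h) (by linarith) (by linarith)
    simp only [hR]
    calc ‖xt (τ + r - (j:ℝ)*h) - xt (τ - (j:ℝ)*h)‖
        ≤ L * |τ + r - (j:ℝ)*h - (τ - (j:ℝ)*h)| := this
      _ = L * r := by
          rw [show τ + r - (j:ℝ)*h - (τ - (j:ℝ)*h) = r by ring, abs_of_nonneg hr0]
  have hB : ‖∑ j ∈ Finset.range (J + 1), cGL α j • R j‖ ≤ 2 * (L * r) := by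
    calc ‖∑ j ∈ Finset.range (J + 1), cGL α j • R j‖
        ≤ ∑ j ∈ Finset.range (J + 1), ‖cGL α j • R j‖ := norm_sum_le _ _
      _ ≤ ∑ j ∈ Finset.range (J + 1), |cGL α j| * (L * r) := by
          apply Finset.sum_le_sum
          intro j _
          rw [norm_smul, Real.norm_eq_abs]
          exact mul_le_mul_of_nonneg_left (hRbound j) (abs_nonneg _)
      _ = (∑ j ∈ Finset.range (J + 1), |cGL α j|) * (L * r) := by
          rw [Finset.sum_mul]
      _ ≤ 2 * (L * r) := by
          apply mul_le_mul_of_nonneg_right (sum_abs_cGL hα0 hα1 _)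
          positivity
  -- bound on sum of |σ|
  have hσabs : ∀ k ∈ Finset.range (J + 1),
      |σ k| = if k < q then Pprod α k else Pprod α (k - q) - Pprod α k := by
    intro k hk
    rw [Finset.mem_range, Nat.lt_succ_iff] at hk
    have hmin : min (k + 1) (J + 1) = k + 1 := min_eq_left (by omega)
    by_cases hkq : k < q
    · have h0 : k + 1 - q = 0 := by omega
      simp only [hσ, hmin, h0, if_pos hkq]
      rw [← Finset.range_eq_Ico, sum_cGL]
      exact abs_of_pos (Pprod_pos hα1 k)
    · push_neg at hkq
      have e1 : σ k = Pprod α k - Pprod α (k - q) := by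
        simp only [hσ, hmin]
        rw [Finset.sum_Ico_eq_sub _ (by omega : k + 1 - q ≤ k + 1)]
        rw [sum_cGL, show k + 1 - q = (k - q) + 1 by omega, sum_cGL]
      rw [if_neg (by omega), e1, abs_of_nonpos (by
        have := Pprod_anti hα0 hα1 (show k - q ≤ k by omega)
        linarith)]
      ring
  have hSig : ∑ k ∈ Finset.range (J + 1), |σ k|
      ≤ 2 * ∑ k ∈ Finset.range q, Pprod α k := by
    have hPnn : ∀ k, 0 ≤ Pprod α k := fun k => le_of_lt (Pprod_pos hα1 k)
    have hSqnn : 0 ≤ ∑ k ∈ Finset.range q, Pprod α k :=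
      Finset.sum_nonneg fun k _ => hPnn k
    rw [Finset.sum_congr rfl hσabs]
    by_cases hc : J + 1 ≤ q
    · have : ∀ k ∈ Finset.range (J + 1),
          (if k < q then Pprod α k else Pprod α (k - q) - Pprod α k) = Pprod α k := by
        intro k hk
        rw [Finset.mem_range] at hk
        rw [if_pos (by omega)]
      rw [Finset.sum_congr rfl this]
      calc ∑ k ∈ Finset.range (J + 1), Pprod α k
          ≤ ∑ k ∈ Finset.range q, Pprod α k := by
            apply Finset.sum_le_sum_of_subset_of_nonneg
              (Finset.range_subset_range.mpr hc) (fun k _ _ => hPnn k)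
        _ ≤ 2 * ∑ k ∈ Finset.range q, Pprod α k := by linarith
    · push_neg at hc
      have hqJ : q ≤ J + 1 := by omega
      rw [Finset.range_eq_Ico, ← Finset.sum_Ico_consecutive _ (Nat.zero_le q) hqJ]
      have e1 : ∑ k ∈ Finset.Ico 0 q,
          (if k < q then Pprod α k else Pprod α (k - q) - Pprod α k)
          = ∑ k ∈ Finset.range q, Pprod α k := by
        rw [← Finset.range_eq_Ico]
        apply Finset.sum_congr rfl
        intro k hk
        rw [Finset.mem_range] at hk
        rw [if_pos hk]
      have e2 : ∑ k ∈ Finset.Ico q (J + 1),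
          (if k < q then Pprod α k else Pprod α (k - q) - Pprod α k)
          = ∑ k ∈ Finset.Ico q (J + 1), (Pprod α (k - q) - Pprod α k) := by
        apply Finset.sum_congr rfl
        intro k hk
        rw [Finset.mem_Ico] at hk
        rw [if_neg (by omega)]
      have e3 : ∑ k ∈ Finset.Ico q (J + 1), Pprod α (k - q)
          = ∑ i ∈ Finset.range (J + 1 - q), Pprod α i := by
        rw [Finset.sum_Ico_eq_sum_range]
        apply Finset.sum_congr rfl
        intro i _
        rw [Nat.add_sub_cancel_left]
      have e4 : ∑ i ∈ Finset.range (J + 1 - q), Pprod α i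
          ≤ (∑ k ∈ Finset.range q, Pprod α k) + ∑ k ∈ Finset.Ico q (J + 1), Pprod α k := by
        rw [show Finset.range q = Finset.Ico 0 q by rw [Finset.range_eq_Ico], Finset.sum_Ico_consecutive _ (Nat.zero_le q) hqJ,
          ← Finset.range_eq_Ico]
        apply Finset.sum_le_sum_of_subset_of_nonneg
          (Finset.range_subset_range.mpr (by omega)) (fun k _ _ => hPnn k)
      have e0 : ∑ k ∈ Finset.Ico 0 q, Pprod α k = ∑ k ∈ Finset.range q, Pprod α k := by
        rw [← Finset.range_eq_Ico]
      rw [e1, e2, Finset.sum_sub_distrib, e3]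
      linarith [e0]
  -- A bound
  have hAbound : ‖∑ j ∈ Finset.range (J + 1), ∑ i ∈ Finset.range q, cGL α j • z (j + i)‖
      ≤ 2 * (L * h) * ((q:ℝ) ^ (1 - α) / (1 - α)) := by
    rcases Nat.eq_zero_or_pos q with hq0 | hqpos
    · simp only [hq0, Finset.range_zero, Finset.sum_empty, Finset.sum_const_zero,
        norm_zero, Nat.cast_zero]
      rw [Real.zero_rpow (by linarith), zero_div, mul_zero]
    · rw [hswap]
      have hsub : Finset.range (J + 1) ⊆ Finset.range (J + q) :=
        Finset.range_subset_range.mpr (by omega)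
      calc ‖∑ k ∈ Finset.range (J + q), σ k • z k‖
          ≤ ∑ k ∈ Finset.range (J + q), |σ k| * ‖z k‖ := by
            refine (norm_sum_le _ _).trans ?_
            apply Finset.sum_le_sum
            intro k _
            rw [norm_smul, Real.norm_eq_abs]
        _ = ∑ k ∈ Finset.range (J + 1), |σ k| * ‖z k‖ := by
            symm
            apply Finset.sum_subset hsub
            intro k hk1 hk2
            rw [Finset.mem_range] at hk1 hk2
            rw [hzzero k (by omega), norm_zero, mul_zero]
        _ ≤ ∑ k ∈ Finset.range (J + 1), |σ k| * (L * h) := by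
            apply Finset.sum_le_sum
            intro k _
            exact mul_le_mul_of_nonneg_left (hzbound k) (abs_nonneg _)
        _ = (∑ k ∈ Finset.range (J + 1), |σ k|) * (L * h) := by rw [Finset.sum_mul]
        _ ≤ (2 * ∑ k ∈ Finset.range q, Pprod α k) * (L * h) := by
            apply mul_le_mul_of_nonneg_right hSig (by positivity)
        _ ≤ (2 * ((q:ℝ) ^ (1 - α) / (1 - α))) * (L * h) := by
            apply mul_le_mul_of_nonneg_right _ (by positivity)
            have s1 : ∑ k ∈ Finset.range q, Pprod α k
                ≤ ∑ k ∈ Finset.range q, ((k:ℝ) + 1) ^ (-α) :=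
              Finset.sum_le_sum fun k _ => Pprod_le_rpow hα0 hα1 k
            have s2 := sum_rpow_le hα0 hα1 q
            linarith
        _ = 2 * (L * h) * ((q:ℝ) ^ (1 - α) / (1 - α)) := by ring
  -- final assembly
  have hhpow : (0:ℝ) < h ^ (-α) := Real.rpow_pos_of_pos hh _
  have hnorm : ‖h ^ (-α) • GLdiff α h x t - h ^ (-α) • GLdiff α h x τ‖
      = h ^ (-α) * ‖GLdiff α h x t - GLdiff α h x τ‖ := by
    rw [← smul_sub, norm_smul, Real.norm_eq_abs, abs_of_pos hhpow]
  have htotal : ‖GLdiff α h x t - GLdiff α h x τ‖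
      ≤ 2 * (L * h) * ((q:ℝ) ^ (1 - α) / (1 - α)) + 2 * (L * r) := by
    rw [hFdiff]
    exact (norm_add_le _ _).trans (add_le_add hAbound hB)
  have c1 : h ^ (-α) * (2 * (L * h) * ((q:ℝ) ^ (1 - α) / (1 - α)))
      ≤ 2 * L / (1 - α) * δ ^ (1 - α) := by
    have e2 : h ^ (-α) * h = h ^ ((1:ℝ) - α) := by
      nth_rewrite 2 [← Real.rpow_one h]
      rw [← Real.rpow_add hh]
      congr 1
      ring
    have e3 : h ^ ((1:ℝ) - α) * (q:ℝ) ^ (1 - α) = ((q:ℝ) * h) ^ (1 - α) := by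
      rw [Real.mul_rpow (Nat.cast_nonneg q) (le_of_lt hh)]
      ring
    have e4 : ((q:ℝ) * h) ^ (1 - α) ≤ δ ^ (1 - α) :=
      Real.rpow_le_rpow (by positivity) hqh (by linarith)
    have e1 : h ^ (-α) * (2 * (L * h) * ((q:ℝ) ^ (1 - α) / (1 - α)))
        = 2 * L / (1 - α) * ((q:ℝ) * h) ^ (1 - α) := by
      rw [← e3, ← e2]
      ring
    rw [e1]
    have hpos : (0:ℝ) ≤ 2 * L / (1 - α) := by
      apply le_of_lt
      apply div_pos (by linarith) (by linarith)
    exact mul_le_mul_of_nonneg_left e4 hpos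
  have c2 : h ^ (-α) * (2 * (L * r)) ≤ 2 * L * δ ^ (1 - α) := by
    have key : r * h ^ (-α) ≤ r ^ ((1:ℝ) - α) := by
      rcases eq_or_lt_of_le hr0 with h0 | hrpos
      · rw [← h0, Real.zero_rpow (by norm_num; linarith : (1:ℝ) - α ≠ 0), zero_mul]
      · have hra : r ^ α ≤ h ^ α := Real.rpow_le_rpow hr0 (le_of_lt hrh) (le_of_lt hα0)
        have h1 : h ^ (-α) ≤ r ^ (-α) := by
          rw [Real.rpow_neg (le_of_lt hh), Real.rpow_neg hr0]
          exact inv_anti₀ (Real.rpow_pos_of_pos hrpos α) hra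
        calc r * h ^ (-α) ≤ r * r ^ (-α) := mul_le_mul_of_nonneg_left h1 hr0
          _ = r ^ ((1:ℝ) - α) := by
              nth_rewrite 1 [← Real.rpow_one r]
              rw [← Real.rpow_add hrpos]
              congr 1
    have key2 : r ^ ((1:ℝ) - α) ≤ δ ^ (1 - α) :=
      Real.rpow_le_rpow hr0 hrδ (by linarith)
    calc h ^ (-α) * (2 * (L * r)) = 2 * L * (r * h ^ (-α)) := by ring
      _ ≤ 2 * L * (r ^ ((1:ℝ) - α)) := mul_le_mul_of_nonneg_left key (by positivity)
      _ ≤ 2 * L * δ ^ (1 - α) := mul_le_mul_of_nonneg_left key2 (by positivity)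
  calc ‖h ^ (-α) • GLdiff α h x t - h ^ (-α) • GLdiff α h x τ‖
      = h ^ (-α) * ‖GLdiff α h x t - GLdiff α h x τ‖ := hnorm
    _ ≤ h ^ (-α) * (2 * (L * h) * ((q:ℝ) ^ (1 - α) / (1 - α)) + 2 * (L * r)) :=
        mul_le_mul_of_nonneg_left htotal (le_of_lt hhpow)
    _ = h ^ (-α) * (2 * (L * h) * ((q:ℝ) ^ (1 - α) / (1 - α)))
        + h ^ (-α) * (2 * (L * r)) := by ring
    _ ≤ 2 * L / (1 - α) * δ ^ (1 - α) + 2 * L * δ ^ (1 - α) := add_le_add c1 c2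
    _ = (2 * L / (1 - α) + 2 * L) * δ ^ (1 - α) := by ring




theorem stmt7 (α T : ℝ) (hα : α ∈ Ioo (0:ℝ) 1) (hT : 0 < T) (n : ℕ)
    (L : ℝ) (hL : 0 < L) :
    ∃ Kb Mb : ℝ, 0 < Kb ∧ 0 < Mb ∧ ∀ h : ℝ, 0 < h → ∀ x : ℝ → Evec n,
      LipschitzOnWith L.toNNReal x (Icc (0:ℝ) T) → x 0 = 0 →
      ∀ t ∈ Icc (0:ℝ) T, ∀ τ ∈ Icc (0:ℝ) T,
        ‖((h ^ (-α) : ℝ)) • GLdiff α h x t - ((h ^ (-α) : ℝ)) • GLdiff α h x τ‖ ≤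
          Kb * |t - τ| ^ (1 - α) ∧
        ‖((h ^ (-α) : ℝ)) • GLdiff α h x t‖ ≤ Mb := by
  obtain ⟨hα0, hα1⟩ := hα
  have h1α : (0:ℝ) < 1 - α := by linarith
  refine ⟨2 * L / (1 - α) + 2 * L, (2 * L / (1 - α) + 2 * L) * T ^ (1 - α), ?_, ?_, ?_⟩
  · positivity
  · have : (0:ℝ) < T ^ (1 - α) := Real.rpow_pos_of_pos hT _
    positivity
  · intro h hh x hx hx0 t ht τ hτ
    constructor
    · rcases le_total τ t with hc | hc
      · rw [abs_of_nonneg (sub_nonneg.mpr hc)]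
        exact main_holder hα0 hα1 hT hL h hh x hx hx0 ht hτ hc
      · rw [norm_sub_rev, abs_sub_comm, abs_of_nonneg (sub_nonneg.mpr hc)]
        exact main_holder hα0 hα1 hT hL h hh x hx hx0 hτ ht hc
    · have hF0 : GLdiff α h x 0 = 0 := by
        unfold GLdiff
        rw [zero_div, Nat.floor_zero, Finset.sum_range_one]
        norm_num [hx0]
      have h0mem : (0:ℝ) ∈ Icc (0:ℝ) T := ⟨le_rfl, le_of_lt hT⟩
      have hmain := main_holder hα0 hα1 hT hL h hh x hx hx0 ht h0mem ht.1
      rw [hF0, smul_zero, sub_zero, sub_zero] at hmain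
      have hrle : t ^ (1 - α) ≤ T ^ (1 - α) :=
        Real.rpow_le_rpow ht.1 ht.2 (le_of_lt h1α)
      have hCnn : (0:ℝ) ≤ 2 * L / (1 - α) + 2 * L := by positivity
      calc ‖(h ^ (-α) : ℝ) • GLdiff α h x t‖
          ≤ (2 * L / (1 - α) + 2 * L) * t ^ (1 - α) := hmain
        _ ≤ (2 * L / (1 - α) + 2 * L) * T ^ (1 - α) :=
            mul_le_mul_of_nonneg_left hrle hCnn
end
end
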